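/- Let Rad be a root system in a finite-dimensional real inner product space V and let t be an involution of Rad. Then there exist a special involution ε of Rad, pairwise strongly orthogonal roots β₁, …, β_r with ε(β_i) = β_i and t(β_i) = −β_i for all i, and a regular vector v ∈ V, such that t = ε ∘ s_{β₁} ∘ ⋯ ∘ s_{β_r} and v is simultaneously an S-chamber vector for t and an S-chamber vector for ε. -/

import Mathlib

/-!
Fix a regular vector `v₀` and choose roots `β` with `t β = -β` greedily, each maximising
`⟪β, v₀⟫` among the candidates orthogonal to those chosen before. Maximality keeps the sum of
two chosen roots out of `Rad`, and the reflection in one of them turns their difference into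
their sum. With `σ` the product of the reflections in the chosen roots, `ε = t σ` is an
involution, and it is special: a root with `ε α = -α` is orthogonal to every chosen root and
negated by `t`, so it would have been a further candidate.

For the common chamber vector take `p` fixed by `t` and orthogonal to no root outside the
`-1`-eigenspace of `t` (so `ε p = p` as well), and `w` regular and fixed by `ε`. For small
`δ > 0` the vector `p + δ w` is regular and fixed by `ε`, and on each root not negated by `t`
it has the sign of `⟪α, p⟫ = ⟪t α, p⟫`.
-/

open scoped RealInnerProductSpace

namespace PaperRS

variable {V : Type*} [NormedAddCommGroup V] [InnerProductSpace ℝ V]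

/-- The reflection in a root `α`. -/
noncomputable def reflRoot (α x : V) : V := x - (2 * ⟪x, α⟫ / ⟪α, α⟫) • α

/-- `Rad` is a (reduced, crystallographic) root system in `V`. -/
structure IsRootSystem (Rad : Set V) : Prop where
  finite : Rad.Finite
  nonzero : ∀ α ∈ Rad, α ≠ 0
  spanning : Submodule.span ℝ Rad = ⊤
  integral : ∀ α ∈ Rad, ∀ β ∈ Rad, ∃ n : ℤ, 2 * ⟪β, α⟫ / ⟪α, α⟫ = (n : ℝ)
  reflMem : ∀ α ∈ Rad, ∀ β ∈ Rad, reflRoot α β ∈ Rad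
  reduced : ∀ α ∈ Rad, ∀ c : ℝ, c • α ∈ Rad → c = 1 ∨ c = -1

/-- Irreducibility: `Rad` is not the union of two nonempty mutually orthogonal subsets. -/
def IsIrreducible (Rad : Set V) : Prop :=
  ¬ ∃ R₁ R₂ : Set V, R₁.Nonempty ∧ R₂.Nonempty ∧ Rad = R₁ ∪ R₂ ∧
      ∀ α ∈ R₁, ∀ β ∈ R₂, ⟪α, β⟫ = 0

/-- An involution of the root system `Rad`: an orthogonal linear automorphism `t` of `V`
with `t(Rad) = Rad` and `t ∘ t = id`. -/
structure IsInvolution (Rad : Set V) (t : V ≃ₗᵢ[ℝ] V) : Prop where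
  maps : (⇑t) '' Rad = Rad
  invol : ∀ x : V, t (t x) = x

/-- Two roots are strongly orthogonal if neither their sum nor their difference is a root. -/
def StronglyOrthogonal (Rad : Set V) (α β : V) : Prop :=
  α ≠ β ∧ α ≠ -β ∧ α + β ∉ Rad ∧ α - β ∉ Rad

/-- A vector is regular for `Rad` if it is orthogonal to no root. -/
def IsRegular (Rad : Set V) (v : V) : Prop := ∀ α ∈ Rad, ⟪α, v⟫ ≠ 0

/-- The positive roots determined by a regular vector `v`. -/
def posRoots (Rad : Set V) (v : V) : Set V := {α ∈ Rad | 0 < ⟪α, v⟫}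

/-- The base of simple roots determined by a regular vector `v`: the positive roots which
are not sums of two positive roots. -/
def simpleBase (Rad : Set V) (v : V) : Set V :=
  {α ∈ posRoots Rad v | ¬ ∃ β ∈ posRoots Rad v, ∃ γ ∈ posRoots Rad v, α = β + γ}

/-- A regular vector `v` is an S-chamber vector for an involution `t` if
`(α,v)·(t α,v) > 0` for every complex root `α` (i.e. every root with `t α ≠ ±α`). -/
def IsSChamber (Rad : Set V) (t : V ≃ₗᵢ[ℝ] V) (v : V) : Prop :=
  IsRegular Rad v ∧
    ∀ α ∈ Rad, t α ≠ α → t α ≠ -α → 0 < ⟪α, v⟫ * ⟪t α, v⟫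

/-- `P ⊆ Rad` is parabolic if `P ∪ (-P) = Rad` and `P` is closed under root addition. -/
def IsParabolic (Rad P : Set V) : Prop :=
  P ⊆ Rad ∧ (∀ α ∈ Rad, α ∈ P ∨ -α ∈ P) ∧
    ∀ α ∈ P, ∀ β ∈ P, α + β ∈ Rad → α + β ∈ P

/-- Composition `s_{β 0} ∘ s_{β 1} ∘ ⋯ ∘ s_{β (r-1)}` of the reflections in the roots
`β 0, …, β (r-1)`. -/
noncomputable def reflComp : (r : ℕ) → (Fin r → V) → V → V
  | 0, _ => id
  | r + 1, β => reflRoot (β 0) ∘ reflComp r (fun i => β i.succ)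

open Filter Topology

theorem reflRoot_eq_reflection (α x : V) : reflRoot α x = (ℝ ∙ α)ᗮ.reflection x := by
  rw [Submodule.reflection_orthogonal_apply, Submodule.reflection_singleton_apply, reflRoot,
    real_inner_self_eq_norm_sq, real_inner_comm]
  simp only [RCLike.ofReal_real_eq_id, id_eq]
  module

theorem reflRoot_self (α : V) : reflRoot α α = -α := by
  rw [reflRoot_eq_reflection, Submodule.reflection_orthogonalComplement_singleton_eq_neg]

theorem reflRoot_of_inner_eq_zero {α x : V} (h : ⟪x, α⟫ = 0) : reflRoot α x = x := by
  simp [reflRoot, h]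

theorem reflRoot_neg (α x : V) : reflRoot (-α) x = reflRoot α x := by
  simp [reflRoot, neg_div]

theorem map_reflRoot (g : V ≃ₗᵢ[ℝ] V) (α x : V) : g (reflRoot α x) = reflRoot (g α) (g x) := by
  simp [reflRoot, LinearIsometryEquiv.inner_map_map]

theorem inner_map_comm_of_involutive (u : V ≃ₗᵢ[ℝ] V) (hu : ∀ x, u (u x) = x) (x y : V) :
    ⟪u x, y⟫ = ⟪x, u y⟫ := by
  simpa [hu] using u.inner_map_map x (u y)

theorem inner_map_of_apply_eq_self (u : V ≃ₗᵢ[ℝ] V) {v : V} (hv : u v = v) (x : V) :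
    ⟪u x, v⟫ = ⟪x, v⟫ := by
  conv_lhs => rw [← hv]
  exact u.inner_map_map x v

theorem inner_eq_zero_of_apply_eq_self_of_apply_eq_neg (u : V ≃ₗᵢ[ℝ] V) {x y : V}
    (hx : u x = x) (hy : u y = -y) : ⟪x, y⟫ = 0 := by
  have h := u.inner_map_map x y
  rw [hx, hy, inner_neg_right] at h
  linarith

theorem IsRootSystem.neg_mem {Rad : Set V} (hRS : IsRootSystem Rad) {α : V} (hα : α ∈ Rad) :
    -α ∈ Rad := by
  simpa [reflRoot_self] using hRS.reflMem α hα α hα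

theorem stronglyOrthogonal_of_inner_eq_zero {Rad : Set V} (hRS : IsRootSystem Rad) {α β : V}
    (hβ : β ∈ Rad) (hαβ : ⟪α, β⟫ = 0) (hsum : α + β ∉ Rad) : StronglyOrthogonal Rad α β := by
  have hββ : ⟪β, β⟫ ≠ 0 := inner_self_ne_zero.2 (hRS.nonzero β hβ)
  refine ⟨fun h => hββ (h ▸ hαβ), fun h => hββ (by simpa [h] using hαβ), hsum, fun h => hsum ?_⟩
  -- the reflection in `β` exchanges `α - β` and `α + β`
  have := hRS.reflMem β hβ _ h
  rwa [reflRoot_eq_reflection, map_sub, ← reflRoot_eq_reflection, ← reflRoot_eq_reflection,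
    reflRoot_of_inner_eq_zero hαβ, reflRoot_self, sub_neg_eq_add] at this

theorem IsInvolution.apply_mem {Rad : Set V} {t : V ≃ₗᵢ[ℝ] V} (ht : IsInvolution Rad t) {α : V}
    (hα : α ∈ Rad) : t α ∈ Rad :=
  ht.maps ▸ Set.mem_image_of_mem t hα

theorem isInvolution_of_mapsTo {Rad : Set V} {u : V ≃ₗᵢ[ℝ] V} (hmaps : ∀ α ∈ Rad, u α ∈ Rad)
    (hu : ∀ x, u (u x) = x) : IsInvolution Rad u :=
  ⟨(Set.image_subset_iff.2 hmaps).antisymm fun α hα => ⟨u α, hmaps α hα, hu α⟩, hu⟩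

noncomputable def reflProd (L : List V) : V ≃ₗᵢ[ℝ] V :=
  (L.map fun γ => (ℝ ∙ γ)ᗮ.reflection).prod

theorem reflProd_cons_apply (a : V) (L : List V) (x : V) :
    reflProd (a :: L) x = reflRoot a (reflProd L x) := by
  simp [reflProd, reflRoot_eq_reflection]

theorem reflComp_length_get (L : List V) (x : V) : reflComp L.length L.get x = reflProd L x := by
  induction L with
  | nil => rfl
  | cons a L ih => rw [reflProd_cons_apply, ← ih]; rfl

theorem reflProd_apply_of_forall_inner_eq_zero {L : List V} {x : V} (h : ∀ γ ∈ L, ⟪x, γ⟫ = 0) :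
    reflProd L x = x := by
  induction L with
  | nil => rfl
  | cons a L ih =>
    rw [reflProd_cons_apply, ih fun γ hγ => h γ (.tail a hγ),
      reflRoot_of_inner_eq_zero (h a (.head L))]

theorem reflProd_apply_of_mem {L : List V} (hL : L.Pairwise (⟪·, ·⟫ = 0)) {γ : V} (hγ : γ ∈ L) :
    reflProd L γ = -γ := by
  induction L with
  | nil => simp at hγ
  | cons a L ih =>
    rw [List.pairwise_cons] at hL
    rw [reflProd_cons_apply]
    rcases List.mem_cons.1 hγ with rfl | hγ
    · rw [reflProd_apply_of_forall_inner_eq_zero hL.1, reflRoot_self]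
    · rw [ih hL.2 hγ, reflRoot_of_inner_eq_zero]
      rw [inner_neg_left, real_inner_comm, hL.1 γ hγ, neg_zero]

theorem map_reflProd (g : V ≃ₗᵢ[ℝ] V) {L : List V} (hg : ∀ γ ∈ L, g γ = γ ∨ g γ = -γ) (x : V) :
    g (reflProd L x) = reflProd L (g x) := by
  induction L with
  | nil => rfl
  | cons a L ih =>
    rw [reflProd_cons_apply, reflProd_cons_apply, map_reflRoot, ih fun γ hγ => hg γ (.tail a hγ)]
    rcases hg a (.head L) with h | h <;> rw [h]
    rw [reflRoot_neg]

theorem reflProd_reflProd {L : List V} (hL : L.Pairwise (⟪·, ·⟫ = 0)) (x : V) :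
    reflProd L (reflProd L x) = x := by
  induction L with
  | nil => rfl
  | cons a L ih =>
    rw [List.pairwise_cons] at hL
    have hcomm := map_reflProd (ℝ ∙ a)ᗮ.reflection (L := L) fun γ hγ => .inl <|
      Submodule.reflection_mem_subspace_eq_self
        (Submodule.mem_orthogonal_singleton_iff_inner_right.2 (hL.1 γ hγ))
    simp only [reflProd_cons_apply, reflRoot_eq_reflection, ← hcomm, ih hL.2,
      Submodule.reflection_reflection]

theorem reflProd_mem {Rad : Set V} (hRS : IsRootSystem Rad) {L : List V} (hL : ∀ γ ∈ L, γ ∈ Rad)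
    {x : V} (hx : x ∈ Rad) : reflProd L x ∈ Rad := by
  induction L with
  | nil => exact hx
  | cons a L ih =>
    rw [reflProd_cons_apply]
    exact hRS.reflMem a (hL a (.head L)) _ (ih fun γ hγ => hL γ (.tail a hγ))

theorem exists_orthogonal_list_maximal (v : V) (S : Finset V) (hneg : ∀ α ∈ S, -α ∈ S)
    (hv : ∀ α ∈ S, ⟪α, v⟫ ≠ 0) :
    ∃ L : List V, (∀ γ ∈ L, γ ∈ S ∧ 0 < ⟪γ, v⟫) ∧
      L.Pairwise (fun a b => ⟪a, b⟫ = 0 ∧ a + b ∉ S) ∧ ∀ α ∈ S, ∃ γ ∈ L, ⟪α, γ⟫ ≠ 0 := by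
  induction S using Finset.strongInduction with | H S ih => ?_
  rcases S.eq_empty_or_nonempty with rfl | hS
  · exact ⟨[], by simp, .nil, by simp⟩
  obtain ⟨a, haS, hamax⟩ := S.exists_max_image (⟪·, v⟫) hS
  have ha : 0 < ⟪a, v⟫ := by
    have := hamax (-a) (hneg a haS)
    rw [inner_neg_left] at this
    exact lt_of_le_of_ne (by linarith) (hv a haS).symm
  have haa : ⟪a, a⟫ ≠ 0 := fun h => hv a haS (by rw [inner_self_eq_zero.1 h, inner_zero_left])
  obtain ⟨L, hLS, hL, hLmax⟩ := ih (S.filter (⟪·, a⟫ = 0))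
    (Finset.filter_ssubset.2 ⟨a, haS, haa⟩)
    (fun α hα => by
      rw [Finset.mem_filter] at hα ⊢
      exact ⟨hneg α hα.1, by rw [inner_neg_left, hα.2, neg_zero]⟩)
    (fun α hα => hv α (Finset.mem_filter.1 hα).1)
  simp only [Finset.mem_filter] at hLS hL hLmax
  refine ⟨a :: L, ?_, .cons (fun γ hγ => ⟨?_, fun h => ?_⟩) (hL.imp_of_mem ?_), ?_⟩
  · simpa [haS, ha] using fun γ hγ => ⟨(hLS γ hγ).1.1, (hLS γ hγ).2⟩
  · rw [real_inner_comm]; exact (hLS γ hγ).1.2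
  · -- `a` was chosen with `⟪a, v⟫` maximal, so `a + γ` cannot lie in `S`
    have := hamax _ h
    rw [inner_add_left] at this
    linarith [(hLS γ hγ).2]
  · intro b c hb hc hbc
    refine ⟨hbc.1, fun h => hbc.2 ⟨h, ?_⟩⟩
    rw [inner_add_left, (hLS b hb).1.2, (hLS c hc).1.2, add_zero]
  · intro α hα
    by_cases hαa : ⟪α, a⟫ = 0
    · obtain ⟨γ, hγ, hαγ⟩ := hLmax α ⟨hα, hαa⟩
      exact ⟨γ, .tail a hγ, hαγ⟩
    · exact ⟨a, .head L, hαa⟩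

theorem exists_apply_eq_self_forall_inner_ne_zero (u : V ≃ₗᵢ[ℝ] V) (hu : ∀ x, u (u x) = x)
    {F : Set V} (hF : F.Finite) (h : ∀ α ∈ F, u α ≠ -α) :
    ∃ v, u v = v ∧ ∀ α ∈ F, ⟪α, v⟫ ≠ 0 := by
  have := hF.to_subtype
  -- `2 ⟪α, α + u α⟫ = ‖α + u α‖ ^ 2`, as `u` is an isometry
  have hwit : ∀ α ∈ F, ⟪α, α + u α⟫ ≠ 0 := by
    intro α hα h'
    have hne : α + u α ≠ 0 := fun h'' => h α hα (eq_neg_of_add_eq_zero_right h'')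
    have hsq := (inner_self_ne_zero (𝕜 := ℝ)).2 hne
    simp only [inner_add_left, inner_add_right, LinearIsometryEquiv.inner_map_map,
      real_inner_comm α (u α)] at hsq h'
    exact hsq (by linarith)
  obtain ⟨v, hv, hvF⟩ := Module.Dual.exists_forall_mem_ne_zero_of_forall_exists
    (LinearMap.eqLocus (u : V →ₗ[ℝ] V) LinearMap.id) (fun α : F => innerₛₗ ℝ (α : V))
    fun α => ⟨α + u α, by simp [hu, add_comm], hwit α α.2⟩
  exact ⟨v, hv, fun α hα => hvF ⟨α, hα⟩⟩

theorem exists_inner_add_smul_sign {F : Set V} (hF : F.Finite) (p w : V)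
    (hw : ∀ α ∈ F, ⟪α, w⟫ ≠ 0) :
    ∃ δ : ℝ, ∀ α ∈ F, ⟪α, p + δ • w⟫ ≠ 0 ∧ (⟪α, p⟫ ≠ 0 → 0 < ⟪α, p⟫ * ⟪α, p + δ • w⟫) := by
  suffices ∀ᶠ δ in 𝓝[>] (0 : ℝ), ∀ α ∈ F, ⟪α, p + δ • w⟫ ≠ 0 ∧
      (⟪α, p⟫ ≠ 0 → 0 < ⟪α, p⟫ * ⟪α, p + δ • w⟫) from this.exists
  refine (Filter.eventually_all_finite hF).2 fun α hα => ?_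
  simp only [inner_add_right, real_inner_smul_right]
  by_cases hp : ⟪α, p⟫ = 0
  · filter_upwards [self_mem_nhdsWithin] with δ (hδ : 0 < δ)
    simp [hp, hδ.ne', hw α hα]
  · have hlim : Tendsto (fun δ : ℝ => ⟪α, p⟫ * (⟪α, p⟫ + δ * ⟪α, w⟫)) (𝓝[>] 0)
        (𝓝 (⟪α, p⟫ * ⟪α, p⟫)) := by
      refine ((by fun_prop : Continuous fun δ : ℝ => ⟪α, p⟫ * (⟪α, p⟫ + δ * ⟪α, w⟫)).tendsto'
        0 _ (by simp)).mono_left nhdsWithin_le_nhds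
    filter_upwards [hlim.eventually_const_lt (mul_self_pos.2 hp)] with δ hδ
    exact ⟨right_ne_zero_of_mul hδ.ne', fun _ => hδ⟩

theorem isSChamber_of_apply_eq_self {Rad : Set V} {u : V ≃ₗᵢ[ℝ] V} {v : V}
    (hv : IsRegular Rad v) (huv : u v = v) : IsSChamber Rad u v :=
  ⟨hv, fun α hα _ _ => by rw [inner_map_of_apply_eq_self u huv]; exact mul_self_pos.2 (hv α hα)⟩

theorem exists_isSChamber_of_forall_apply_eq_self {Rad : Set V} (hRad : Rad.Finite)
    {t ε : V ≃ₗᵢ[ℝ] V} (ht : IsInvolution Rad t) (hε : ∀ x, ε (ε x) = x)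
    (hspecial : ∀ α ∈ Rad, ε α ≠ -α) (hfix : ∀ x, t x = x → ε x = x) :
    ∃ v, IsSChamber Rad t v ∧ IsSChamber Rad ε v := by
  obtain ⟨p, hpt, hp⟩ := exists_apply_eq_self_forall_inner_ne_zero t ht.invol
    (hRad.subset (Set.sep_subset Rad fun α => t α ≠ -α)) fun α hα => hα.2
  obtain ⟨w, hwε, hw⟩ := exists_apply_eq_self_forall_inner_ne_zero ε hε hRad hspecial
  obtain ⟨δ, hδ⟩ := exists_inner_add_smul_sign hRad p w hw
  have hreg : IsRegular Rad (p + δ • w) := fun α hα => (hδ α hα).1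
  refine ⟨p + δ • w, ⟨hreg, fun α hα _ hα' => ?_⟩,
    isSChamber_of_apply_eq_self hreg (by rw [map_add, map_smul, hfix p hpt, hwε])⟩
  -- both `⟪α, v⟫` and `⟪t α, v⟫` have the sign of `⟪α, p⟫ = ⟪t α, p⟫`
  have hαp : ⟪α, p⟫ ≠ 0 := hp α ⟨hα, hα'⟩
  have h₁ := (hδ α hα).2 hαp
  have h₂ := (hδ (t α) (ht.apply_mem hα)).2
  rw [inner_map_of_apply_eq_self t hpt] at h₂
  nlinarith [mul_pos h₁ (h₂ hαp), sq_nonneg ⟪α, p⟫]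

theorem exists_maximal_stronglyOrthogonal_list {Rad : Set V} (hRS : IsRootSystem Rad)
    (t : V ≃ₗᵢ[ℝ] V) :
    ∃ L : List V, (∀ γ ∈ L, γ ∈ Rad ∧ t γ = -γ) ∧ L.Pairwise (⟪·, ·⟫ = 0) ∧
      (∀ i j, i ≠ j → StronglyOrthogonal Rad (L.get i) (L.get j)) ∧
      ∀ α ∈ Rad, t α = -α → ∃ γ ∈ L, ⟪α, γ⟫ ≠ 0 := by
  set S := (hRS.finite.subset (Set.sep_subset Rad fun α => t α = -α)).toFinset
  have hS {α : V} : α ∈ S ↔ α ∈ Rad ∧ t α = -α := by simp [S]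
  obtain ⟨v, -, hv⟩ := exists_apply_eq_self_forall_inner_ne_zero (.refl ℝ V) (fun _ => rfl)
    hRS.finite fun α hα h => hRS.nonzero α hα <| by
      rwa [LinearIsometryEquiv.coe_refl, id, eq_neg_iff_add_eq_zero, ← two_smul ℝ, smul_eq_zero,
        or_iff_right two_ne_zero] at h
  obtain ⟨L, hLS, hL, hmax⟩ := exists_orthogonal_list_maximal v S
    (fun α hα => hS.2 ⟨hRS.neg_mem (hS.1 hα).1, by rw [map_neg, (hS.1 hα).2]⟩)
    fun α hα => hv α (hS.1 hα).1
  have hLt : ∀ γ ∈ L, γ ∈ Rad ∧ t γ = -γ := fun γ hγ => hS.1 (hLS γ hγ).1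
  have hSO {a b : V} (ha : a ∈ L) (hb : b ∈ L) (hab : ⟪a, b⟫ = 0) (hsum : a + b ∉ S) :
      StronglyOrthogonal Rad a b :=
    stronglyOrthogonal_of_inner_eq_zero hRS (hLt b hb).1 hab fun h =>
      hsum (hS.2 ⟨h, by rw [map_add, (hLt a ha).2, (hLt b hb).2, neg_add]⟩)
  refine ⟨L, hLt, hL.imp And.left, fun i j hij => ?_, fun α hα hα' => hmax α (hS.2 ⟨hα, hα'⟩)⟩
  rcases hij.lt_or_gt with h | h
  · exact hSO (L.get_mem i) (L.get_mem j) (hL.rel_get_of_lt h).1 (hL.rel_get_of_lt h).2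
  · refine hSO (L.get_mem i) (L.get_mem j) ?_ ?_
    · rw [real_inner_comm]; exact (hL.rel_get_of_lt h).1
    · rw [add_comm]; exact (hL.rel_get_of_lt h).2

section Involution

variable {t : V ≃ₗᵢ[ℝ] V} {L : List V}

theorem mul_reflProd_apply_of_mem (hLt : ∀ γ ∈ L, t γ = -γ) (hL : L.Pairwise (⟪·, ·⟫ = 0))
    {γ : V} (hγ : γ ∈ L) : (t * reflProd L) γ = γ := by
  rw [LinearIsometryEquiv.coe_mul, Function.comp_apply, reflProd_apply_of_mem hL hγ, map_neg,
    hLt γ hγ, neg_neg]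

theorem mul_reflProd_apply_of_apply_eq_self (hLt : ∀ γ ∈ L, t γ = -γ) {x : V} (hx : t x = x) :
    (t * reflProd L) x = x := by
  rw [LinearIsometryEquiv.coe_mul, Function.comp_apply, reflProd_apply_of_forall_inner_eq_zero
    fun γ hγ => inner_eq_zero_of_apply_eq_self_of_apply_eq_neg t hx (hLt γ hγ), hx]

theorem mul_reflProd_involutive (ht : ∀ x, t (t x) = x) (hLt : ∀ γ ∈ L, t γ = -γ)
    (hL : L.Pairwise (⟪·, ·⟫ = 0)) (x : V) : (t * reflProd L) ((t * reflProd L) x) = x := by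
  simp only [LinearIsometryEquiv.coe_mul, Function.comp_apply,
    ← map_reflProd t (fun γ hγ => .inr (hLt γ hγ)), ht, reflProd_reflProd hL]

theorem mul_reflProd_ne_neg {Rad : Set V} (ht : ∀ x, t (t x) = x) (hLt : ∀ γ ∈ L, t γ = -γ)
    (hL : L.Pairwise (⟪·, ·⟫ = 0)) (hmax : ∀ α ∈ Rad, t α = -α → ∃ γ ∈ L, ⟪α, γ⟫ ≠ 0)
    {α : V} (hα : α ∈ Rad) : (t * reflProd L) α ≠ -α := by
  intro hεα
  have hσα : reflProd L α = -t α := by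
    simpa [ht] using congrArg t hεα
  have horth : ∀ γ ∈ L, ⟪α, γ⟫ = 0 := by
    intro γ hγ
    have : ⟪α, γ⟫ = -⟪α, γ⟫ := calc
      ⟪α, γ⟫ = ⟪reflProd L α, reflProd L γ⟫ := (LinearIsometryEquiv.inner_map_map _ _ _).symm
      _ = ⟪t α, γ⟫ := by rw [hσα, reflProd_apply_of_mem hL hγ, inner_neg_neg]
      _ = ⟪α, t γ⟫ := inner_map_comm_of_involutive t ht α γ
      _ = -⟪α, γ⟫ := by rw [hLt γ hγ, inner_neg_right]
    linarith
  rw [reflProd_apply_of_forall_inner_eq_zero horth] at hσα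
  obtain ⟨γ, hγ, hne⟩ := hmax α hα (neg_eq_iff_eq_neg.1 hσα.symm)
  exact hne (horth γ hγ)

end Involution

theorem stmt12_general {V : Type*} [NormedAddCommGroup V] [InnerProductSpace ℝ V]
    (Rad : Set V) (hRS : IsRootSystem Rad)
    (t : V ≃ₗᵢ[ℝ] V) (ht : IsInvolution Rad t) :
    ∃ (ε : V ≃ₗᵢ[ℝ] V) (r : ℕ) (β : Fin r → V) (v : V),
      IsInvolution Rad ε ∧ (∀ α ∈ Rad, ε α ≠ -α) ∧
      (∀ i, β i ∈ Rad) ∧ (∀ i j, i ≠ j → StronglyOrthogonal Rad (β i) (β j)) ∧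
      (∀ i, ε (β i) = β i) ∧ (∀ i, t (β i) = -(β i)) ∧
      (∀ x : V, t x = ε (reflComp r β x)) ∧
      IsSChamber Rad t v ∧ IsSChamber Rad ε v := by
  obtain ⟨L, hLt, hL, hSO, hmax⟩ := exists_maximal_stronglyOrthogonal_list hRS t
  have hLneg : ∀ γ ∈ L, t γ = -γ := fun γ hγ => (hLt γ hγ).2
  have hεinvol := mul_reflProd_involutive ht.invol hLneg hL
  have hεRad : ∀ α ∈ Rad, (t * reflProd L) α ∈ Rad :=
    fun α hα => ht.apply_mem (reflProd_mem hRS (fun γ hγ => (hLt γ hγ).1) hα)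
  have hspecial : ∀ α ∈ Rad, (t * reflProd L) α ≠ -α :=
    fun α hα => mul_reflProd_ne_neg ht.invol hLneg hL hmax hα
  obtain ⟨v, hvt, hvε⟩ := exists_isSChamber_of_forall_apply_eq_self hRS.finite ht hεinvol hspecial
    fun x hx => mul_reflProd_apply_of_apply_eq_self hLneg hx
  refine ⟨t * reflProd L, L.length, L.get, v, isInvolution_of_mapsTo hεRad hεinvol, hspecial,
    fun i => (hLt _ (L.get_mem i)).1, hSO, fun i => mul_reflProd_apply_of_mem hLneg hL (L.get_mem i),
    fun i => hLneg _ (L.get_mem i), fun x => ?_, hvt, hvε⟩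
  rw [reflComp_length_get, LinearIsometryEquiv.coe_mul, Function.comp_apply, reflProd_reflProd hL]

/-- every involution `t` admits a decomposition
`t = ε ∘ s_{β₁} ∘ ⋯ ∘ s_{β_r}`, with `ε` special, the `β_i` pairwise strongly orthogonal
roots fixed by `ε` and negated by `t`, together with a vector which is simultaneously an
S-chamber vector for `t` and for `ε`. -/
theorem stmt12 {V : Type*} [NormedAddCommGroup V] [InnerProductSpace ℝ V]
    [FiniteDimensional ℝ V] (Rad : Set V) (hRS : IsRootSystem Rad)
    (t : V ≃ₗᵢ[ℝ] V) (ht : IsInvolution Rad t) :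
    ∃ (ε : V ≃ₗᵢ[ℝ] V) (r : ℕ) (β : Fin r → V) (v : V),
      IsInvolution Rad ε ∧ (∀ α ∈ Rad, ε α ≠ -α) ∧
      (∀ i, β i ∈ Rad) ∧ (∀ i j, i ≠ j → StronglyOrthogonal Rad (β i) (β j)) ∧
      (∀ i, ε (β i) = β i) ∧ (∀ i, t (β i) = -(β i)) ∧
      (∀ x : V, t x = ε (reflComp r β x)) ∧
      IsSChamber Rad t v ∧ IsSChamber Rad ε v :=
  stmt12_general Rad hRS t ht

end PaperRS
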